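/- Let D be a Eulerian directed graph on n vertices with all degrees positive. For any subsets X, Y of V, ||E(X,Y)| − vol(X)·vol(Y)/vol(D)| ≤ σ_0 · √(vol(X)·vol(Y)·vol(X̄)·vol(Ȳ)) / vol(D), where E(X,Y) is the set of directed edges (u,v) of D with u ∈ X and v ∈ Y, and σ_0 is the second largest singular value of T^{-1/2} A T^{-1/2}. -/

import Mathlib

/-!
With `T^{1/2}` the diagonal matrix of `√d_x`, take `f = T^{1/2}(𝟙_X - (vol X / vol D) 𝟙)` and
`g = T^{1/2}(𝟙_Y - (vol Y / vol D) 𝟙)`. Both are orthogonal to `φ₀`, and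
`‖f‖² = vol X · vol X̄ / vol D`. Since `D` is Eulerian, the row and the column sums of `A` are both
the degrees, so `⟨f, T^{-1/2} A T^{-1/2} g⟩ = |E(X,Y)| - vol X · vol Y / vol D`. Cauchy–Schwarz and
`‖T^{-1/2} A T^{-1/2} g‖ ≤ σ₀ ‖g‖` give the bound.
-/

open Matrix Polynomial

noncomputable section

/-- The (out-)degree of a vertex in a directed graph with adjacency matrix `A`. -/
def ddeg {V : Type*} [Fintype V] (A : Matrix V V ℝ) (x : V) : ℝ := ∑ y, A x y

/-- The diagonal matrix `T^{-1/2}` of a directed graph. -/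
def dInvSqrtT {V : Type*} [Fintype V] [DecidableEq V] (A : Matrix V V ℝ) : Matrix V V ℝ :=
  Matrix.diagonal fun x => (Real.sqrt (ddeg A x))⁻¹

/-- The non-symmetric Laplacian `vecL = I - T^{-1/2} A T^{-1/2}` of a directed graph. -/
def dvecL {V : Type*} [Fintype V] [DecidableEq V] (A : Matrix V V ℝ) : Matrix V V ℝ :=
  1 - dInvSqrtT A * A * dInvSqrtT A

/-- The Laplacian `(vecL + vecLᵀ)/2` of a directed graph. -/
def dLap {V : Type*} [Fintype V] [DecidableEq V] (A : Matrix V V ℝ) : Matrix V V ℝ :=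
  (1 / 2 : ℝ) • (dvecL A + (dvecL A)ᵀ)

/-- The matrix `L_α = I - (1-α) vecL = T^{1/2} P_α T^{-1/2}`. -/
def dLalpha {V : Type*} [Fintype V] [DecidableEq V] (A : Matrix V V ℝ) (α : ℝ) :
    Matrix V V ℝ :=
  1 - (1 - α) • dvecL A

/-- The transition matrix `P_α = α I + (1-α) T⁻¹ A` of the α-lazy random walk. -/
def dTrans {V : Type*} [Fintype V] [DecidableEq V] (A : Matrix V V ℝ) (α : ℝ) :
    Matrix V V ℝ :=
  α • (1 : Matrix V V ℝ) + (1 - α) • ((Matrix.diagonal fun x => (ddeg A x)⁻¹) * A)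

/-- The volume of a set of vertices of a directed graph. -/
def dvol {V : Type*} [Fintype V] (A : Matrix V V ℝ) (X : Finset V) : ℝ :=
  ∑ x ∈ X, ddeg A x

/-- The unit vector `φ₀` with `φ₀(x) = √(d_x)/√(vol D)`. -/
def dphi {V : Type*} [Fintype V] (A : Matrix V V ℝ) : V → ℝ :=
  fun x => Real.sqrt (ddeg A x) / Real.sqrt (dvol A Finset.univ)

/-- Euclidean norm of a (row or column) vector. -/
def euclNorm {m : Type*} [Fintype m] (f : m → ℝ) : ℝ := Real.sqrt (∑ x, f x ^ 2)

/-- The set of values `‖L_α f‖ / ‖f‖` over nonzero vectors `f` orthogonal to `φ₀ᵀ`;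
its greatest element is the second largest singular value `σ_α` of `L_α`. -/
def sigmaSet {V : Type*} [Fintype V] [DecidableEq V] (A : Matrix V V ℝ) (α : ℝ) : Set ℝ :=
  {r | ∃ f : V → ℝ, f ≠ 0 ∧ (∑ x, f x * dphi A x) = 0 ∧
    r = euclNorm (dLalpha A α *ᵥ f) / euclNorm f}

/-- `μ` lists the eigenvalues of the square matrix `M` (with multiplicity)
in non-decreasing order. -/
def IsEigenSeq {m : Type*} [Fintype m] [DecidableEq m] (M : Matrix m m ℝ) {n : ℕ}
    (μ : Fin n → ℝ) : Prop :=
  Monotone μ ∧ M.charpoly = ∏ i, (X - C (μ i))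

open Finset

section Eulerian

variable {V : Type*} [Fintype V] [DecidableEq V] (A : Matrix V V ℝ)

lemma dLalpha_zero : dLalpha A 0 = dInvSqrtT A * A * dInvSqrtT A := by
  simp [dLalpha, dvecL]

lemma dvol_compl (X : Finset V) : dvol A Xᶜ = dvol A univ - dvol A X := by
  rw [dvol, dvol, dvol, ← sum_add_sum_compl X, add_sub_cancel_left]

lemma sqrtDeg_dotProduct_dLalpha_zero_mulVec (hdeg : ∀ x, 0 < ddeg A x) (u v : V → ℝ) :
    (fun x => u x * √(ddeg A x)) ⬝ᵥ (dLalpha A 0 *ᵥ fun y => v y * √(ddeg A y)) =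
      u ⬝ᵥ (A *ᵥ v) := by
  have hs : ∀ x, √(ddeg A x) ≠ 0 := fun x => (Real.sqrt_pos.2 (hdeg x)).ne'
  have hv : (dInvSqrtT A *ᵥ fun y => v y * √(ddeg A y)) = v := by
    ext y
    simp only [dInvSqrtT, mulVec_diagonal]
    field_simp [hs y]
  rw [dLalpha_zero, ← mulVec_mulVec, ← mulVec_mulVec, hv]
  simp only [dotProduct, dInvSqrtT, mulVec_diagonal]
  refine sum_congr rfl fun x _ => ?_
  field_simp [hs x]

lemma centered_indicator_dotProduct_mulVec (hEuler : ∀ x, ∑ y, A x y = ∑ y, A y x)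
    (X Y : Finset V) (a b : ℝ) :
    (fun x => (if x ∈ X then 1 else 0) - a) ⬝ᵥ (A *ᵥ fun y => (if y ∈ Y then 1 else 0) - b) =
      (∑ x ∈ X, ∑ y ∈ Y, A x y) - b * dvol A X - a * dvol A Y + a * b * dvol A univ := by
  have hcol : ∀ y, ∑ x, A x y = ddeg A y := fun y => (hEuler y).symm
  have hY : ∑ x, ∑ y ∈ Y, A x y = dvol A Y :=
    sum_comm.trans (sum_congr rfl fun y _ => hcol y)
  simp only [dotProduct, mulVec, mul_sub, sub_mul, sum_sub_distrib, mul_one, mul_ite, ite_mul,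
    mul_zero, zero_mul, sum_ite_mem, univ_inter, one_mul, ← sum_mul, ← mul_sum, hY]
  simp only [dvol, ddeg]
  ring

def mixingVec (X : Finset V) : V → ℝ :=
  fun x => ((if x ∈ X then 1 else 0) - dvol A X / dvol A univ) * √(ddeg A x)

lemma mixingVec_orthogonal (hdeg : ∀ x, 0 ≤ ddeg A x) (X : Finset V) :
    ∑ x, mixingVec A X x * dphi A x = 0 := by
  set c := dvol A X / dvol A univ
  have hterm : ∀ x, mixingVec A X x * dphi A x =
      ((if x ∈ X then ddeg A x else 0) - c * ddeg A x) / √(dvol A univ) := by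
    intro x
    simp only [mixingVec, dphi]
    rw [mul_div_assoc', mul_assoc, Real.mul_self_sqrt (hdeg x)]
    split_ifs <;> ring
  rw [sum_congr rfl fun x _ => hterm x, ← sum_div, sum_sub_distrib, sum_ite_mem, univ_inter,
    ← mul_sum]
  rcases eq_or_ne (dvol A univ) 0 with hvol | hvol
  · simp [hvol]
  · simp only [c, dvol] at hvol ⊢
    field_simp
    ring

lemma sum_mixingVec_sq (hdeg : ∀ x, 0 ≤ ddeg A x) (hvol : dvol A univ ≠ 0) (X : Finset V) :
    ∑ x, mixingVec A X x ^ 2 = dvol A X * dvol A Xᶜ / dvol A univ := by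
  set c := dvol A X / dvol A univ
  have hterm : ∀ x, mixingVec A X x ^ 2 =
      (1 - 2 * c) * (if x ∈ X then ddeg A x else 0) + c ^ 2 * ddeg A x := by
    intro x
    simp only [mixingVec, mul_pow, Real.sq_sqrt (hdeg x)]
    split_ifs <;> ring
  rw [sum_congr rfl fun x _ => hterm x, sum_add_distrib, ← mul_sum, ← mul_sum, sum_ite_mem,
    univ_inter, dvol_compl]
  simp only [c, dvol] at hvol ⊢
  field_simp
  ring

lemma mixingVec_dotProduct_dLalpha_zero_mulVec (hdeg : ∀ x, 0 < ddeg A x)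
    (hEuler : ∀ x, ∑ y, A x y = ∑ y, A y x) (hvol : dvol A univ ≠ 0) (X Y : Finset V) :
    mixingVec A X ⬝ᵥ (dLalpha A 0 *ᵥ mixingVec A Y) =
      (∑ x ∈ X, ∑ y ∈ Y, A x y) - dvol A X * dvol A Y / dvol A univ := by
  have h := sqrtDeg_dotProduct_dLalpha_zero_mulVec A hdeg
    (fun x => (if x ∈ X then 1 else 0) - dvol A X / dvol A univ)
    (fun y => (if y ∈ Y then 1 else 0) - dvol A Y / dvol A univ)
  rw [centered_indicator_dotProduct_mulVec A hEuler] at h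
  refine h.trans ?_
  field_simp
  ring

end Eulerian

lemma abs_dotProduct_le_euclNorm_mul {m : Type*} [Fintype m] (f g : m → ℝ) :
    |f ⬝ᵥ g| ≤ euclNorm f * euclNorm g := by
  rw [euclNorm, euclNorm, ← Real.sqrt_mul (sum_nonneg fun _ _ => sq_nonneg _),
    ← Real.sqrt_sq_eq_abs]
  exact Real.sqrt_le_sqrt (sum_mul_sq_le_sq_mul_sq univ f g)

lemma euclNorm_pos {m : Type*} [Fintype m] {f : m → ℝ} (hf : f ≠ 0) : 0 < euclNorm f := by
  obtain ⟨x, hx⟩ := Function.ne_iff.1 hf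
  exact Real.sqrt_pos.2 (sum_pos' (fun _ _ => sq_nonneg _) ⟨x, mem_univ x, sq_pos_of_ne_zero hx⟩)

lemma euclNorm_dLalpha_mulVec_le {V : Type*} [Fintype V] [DecidableEq V] {A : Matrix V V ℝ}
    {α σ : ℝ} (hσ : IsGreatest (sigmaSet A α) σ) {f : V → ℝ} (hf : ∑ x, f x * dphi A x = 0) :
    euclNorm (dLalpha A α *ᵥ f) ≤ σ * euclNorm f := by
  rcases eq_or_ne f 0 with rfl | hf0
  · simp [euclNorm]
  · exact (div_le_iff₀ (euclNorm_pos hf0)).1 (hσ.2 ⟨f, hf0, hf, rfl⟩)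

theorem stmt_8_general {V : Type*} [Fintype V] [DecidableEq V]
    (A : Matrix V V ℝ)
    (hEuler : ∀ x, (∑ y, A x y) = ∑ y, A y x)
    (hdegpos : ∀ x, 0 < ddeg A x)
    (σ₀ : ℝ) (hσ₀ : IsGreatest (sigmaSet A 0) σ₀)
    (X Y : Finset V) :
    |(∑ x ∈ X, ∑ y ∈ Y, A x y) - dvol A X * dvol A Y / dvol A Finset.univ| ≤
      σ₀ * Real.sqrt (dvol A X * dvol A Y * dvol A Xᶜ * dvol A Yᶜ) /
        dvol A Finset.univ := by
  obtain ⟨w, hw, -⟩ := hσ₀.1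
  obtain ⟨v, -⟩ := Function.ne_iff.1 hw
  have hvol : 0 < dvol A univ := sum_pos (fun x _ => hdegpos x) ⟨v, mem_univ v⟩
  have hdeg : ∀ x, 0 ≤ ddeg A x := fun x => (hdegpos x).le
  have hvol_mul_compl : ∀ Z : Finset V, 0 ≤ dvol A Z * dvol A Zᶜ :=
    fun Z => mul_nonneg (sum_nonneg fun x _ => hdeg x) (sum_nonneg fun x _ => hdeg x)
  rw [← mixingVec_dotProduct_dLalpha_zero_mulVec A hdegpos hEuler hvol.ne']
  calc _ ≤ euclNorm (mixingVec A X) * euclNorm (dLalpha A 0 *ᵥ mixingVec A Y) :=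
        abs_dotProduct_le_euclNorm_mul _ _
    _ ≤ euclNorm (mixingVec A X) * (σ₀ * euclNorm (mixingVec A Y)) :=
        mul_le_mul_of_nonneg_left (euclNorm_dLalpha_mulVec_le hσ₀ (mixingVec_orthogonal A hdeg Y))
          (Real.sqrt_nonneg _)
    _ = _ := by
      rw [euclNorm, euclNorm, sum_mixingVec_sq A hdeg hvol.ne', sum_mixingVec_sq A hdeg hvol.ne',
        Real.sqrt_div (hvol_mul_compl X), Real.sqrt_div (hvol_mul_compl Y),
        show dvol A X * dvol A Y * dvol A Xᶜ * dvol A Yᶜ =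
          dvol A X * dvol A Xᶜ * (dvol A Y * dvol A Yᶜ) by ring, Real.sqrt_mul (hvol_mul_compl X)]
      field_simp
      rw [Real.sq_sqrt hvol.le]
      ring

/-- expander mixing lemma for Eulerian directed graphs via `σ₀`. -/
theorem stmt_8 {V : Type*} [Fintype V] [DecidableEq V]
    (A : Matrix V V ℝ)
    (h01 : ∀ x y, A x y = 0 ∨ A x y = 1)
    (hEuler : ∀ x, (∑ y, A x y) = ∑ y, A y x)
    (hdegpos : ∀ x, 0 < ddeg A x)
    (σ₀ : ℝ) (hσ₀ : IsGreatest (sigmaSet A 0) σ₀)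
    (X Y : Finset V) :
    |(∑ x ∈ X, ∑ y ∈ Y, A x y) - dvol A X * dvol A Y / dvol A Finset.univ| ≤
      σ₀ * Real.sqrt (dvol A X * dvol A Y * dvol A Xᶜ * dvol A Yᶜ) /
        dvol A Finset.univ :=
  stmt_8_general A hEuler hdegpos σ₀ hσ₀ X Y
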